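/- The map v ↦ |||v||| defines a norm on the finite-dimensional space V_N⁰; in particular, if v = (v₀, v_b, 𝐯_g) ∈ V_N⁰ satisfies |||v||| = 0, then v₀ = 0 on every element of 𝒯_N, v_b = 0 on every edge, and 𝐯_g = 0 on every edge. -/

import Mathlib

open MeasureTheory Real

noncomputable section

/-- `Q_k`: real polynomials in two variables of degree at most `k` in each variable. -/
def IsQk (k : ℕ) (v : ℝ → ℝ → ℝ) : Prop :=
  ∃ p : MvPolynomial (Fin 2) ℝ, (∀ i, p.degreeOf i ≤ k) ∧
    ∀ x y : ℝ, v x y = MvPolynomial.eval ![x, y] p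

/-- `P_k`: real polynomials in one variable of degree at most `k`. -/
def IsPk (k : ℕ) (f : ℝ → ℝ) : Prop :=
  ∃ p : Polynomial ℝ, p.natDegree ≤ k ∧ ∀ x : ℝ, f x = p.eval x

/-- Partial derivative in the first variable. -/
def pd1 (w : ℝ → ℝ → ℝ) : ℝ → ℝ → ℝ := fun x y => deriv (fun t => w t y) x

/-- Partial derivative in the second variable. -/
def pd2 (w : ℝ → ℝ → ℝ) : ℝ → ℝ → ℝ := fun x y => deriv (fun t => w x t) y

/-- Laplacian. -/
def lapl (w : ℝ → ℝ → ℝ) : ℝ → ℝ → ℝ :=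
  fun x y => pd1 (pd1 w) x y + pd2 (pd2 w) x y

/-- L² inner product over the rectangle `[x0,x1] × [y0,y1]`. -/
def ipT (x0 x1 y0 y1 : ℝ) (f g : ℝ → ℝ → ℝ) : ℝ :=
  ∫ x in x0..x1, ∫ y in y0..y1, f x y * g x y

/-- Squared L² norm over the rectangle `[x0,x1] × [y0,y1]`. -/
def normSqT (x0 x1 y0 y1 : ℝ) (w : ℝ → ℝ → ℝ) : ℝ := ipT x0 x1 y0 y1 w w

/-- Squared L² norm over the two edges parallel to the x-axis (`∂T₁`). -/
def normSqE1 (x0 x1 y0 y1 : ℝ) (w : ℝ → ℝ → ℝ) : ℝ :=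
  ∫ x in x0..x1, ((w x y0) ^ 2 + (w x y1) ^ 2)

/-- Squared L² norm over the two edges parallel to the y-axis (`∂T₂`). -/
def normSqE2 (x0 x1 y0 y1 : ℝ) (w : ℝ → ℝ → ℝ) : ℝ :=
  ∫ y in y0..y1, ((w x0 y) ^ 2 + (w x1 y) ^ 2)

/-- `P` is the L²(T)-orthogonal projection of `φ` onto `Q_k(T)`. -/
def IsProjT (k : ℕ) (x0 x1 y0 y1 : ℝ) (φ P : ℝ → ℝ → ℝ) : Prop :=
  IsQk k P ∧ ∀ q : ℝ → ℝ → ℝ, IsQk k q →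
    ipT x0 x1 y0 y1 (fun x y => φ x y - P x y) q = 0

/-- `g` is the L²(e)-orthogonal projection of `f` onto `P_k(e)`, for an edge
parametrized by `[a,b]`. -/
def IsProjE (k : ℕ) (a b : ℝ) (f g : ℝ → ℝ) : Prop :=
  IsPk k g ∧ ∀ q : ℝ → ℝ, IsPk k q → (∫ x in a..b, (f x - g x) * q x) = 0

/-- Mixed partial derivative `∂₁^i ∂₂^j`. -/
def pdM (i j : ℕ) (w : ℝ → ℝ → ℝ) : ℝ → ℝ → ℝ := pd1^[i] (pd2^[j] w)

/-- The 1D Shishkin mesh points on `[0,1]` with transition parameter `lam`: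
`[0,lam]` is divided into `N/4` equal subintervals, `[lam, 1-lam]` into `N/2`,
and `[1-lam, 1]` into `N/4`. -/
def meshPt (N : ℕ) (lam : ℝ) (i : ℕ) : ℝ :=
  if i ≤ N / 4 then (i : ℝ) * (4 * lam / N)
  else if i ≤ 3 * (N / 4) then lam + ((i : ℝ) - (↑(N / 4) : ℝ)) * (2 * (1 - 2 * lam) / N)
  else 1 - lam + ((i : ℝ) - (↑(3 * (N / 4)) : ℝ)) * (4 * lam / N)

/-- The Shishkin transition parameter `λ = α ε ln N` with `α = k + 1`. -/
def shLam (k N : ℕ) (ε : ℝ) : ℝ := ((k : ℝ) + 1) * ε * Real.log N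

/-- The Shishkin mesh points for the parameters `k`, `N`, `ε`. -/
def shPt (k N : ℕ) (ε : ℝ) (i : ℕ) : ℝ := meshPt N (shLam k N ε) i

/-- The fine mesh width `h = 4λ/N`. -/
def shH (k N : ℕ) (ε : ℝ) : ℝ := 4 * shLam k N ε / N

/-- The coarse mesh width `H = 2(1-2λ)/N`. -/
def shHc (k N : ℕ) (ε : ℝ) : ℝ := 2 * (1 - 2 * shLam k N ε) / N

/-- `w` is `C^{k+1}` (as a function of two variables). -/
def SmoothC (k : ℕ) (w : ℝ → ℝ → ℝ) : Prop :=
  ContDiff ℝ (k + 1) (fun p : ℝ × ℝ => w p.1 p.2)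

/-- The layer decomposition `u = S + E₁ + E₂ + E₃ + E₄ + E₁₂ + E₂₃ + E₃₄ + E₄₁`
on `Ω̄ = [0,1]²`, together with the derivative bounds of Assumption 2.1. -/
structure ShishkinDecomp (k : ℕ) (C₀ ε : ℝ)
    (u S E1 E2 E3 E4 E12 E23 E34 E41 : ℝ → ℝ → ℝ) : Prop where
  smooth_u : SmoothC k u
  smooth_S : SmoothC k S
  smooth_E1 : SmoothC k E1
  smooth_E2 : SmoothC k E2
  smooth_E3 : SmoothC k E3
  smooth_E4 : SmoothC k E4
  smooth_E12 : SmoothC k E12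
  smooth_E23 : SmoothC k E23
  smooth_E34 : SmoothC k E34
  smooth_E41 : SmoothC k E41
  sum_eq : ∀ x ∈ Set.Icc (0:ℝ) 1, ∀ y ∈ Set.Icc (0:ℝ) 1,
    u x y = S x y + E1 x y + E2 x y + E3 x y + E4 x y
      + E12 x y + E23 x y + E34 x y + E41 x y
  bound_S : ∀ i j : ℕ, i + j ≤ k + 1 → ∀ x ∈ Set.Icc (0:ℝ) 1, ∀ y ∈ Set.Icc (0:ℝ) 1,
    |pdM i j S x y| ≤ C₀
  bound_E1 : ∀ i j : ℕ, i + j ≤ k + 1 → ∀ x ∈ Set.Icc (0:ℝ) 1, ∀ y ∈ Set.Icc (0:ℝ) 1,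
    |pdM i j E1 x y| ≤ C₀ * ε ^ ((1 : ℝ) - j) * Real.exp (-y / ε)
  bound_E2 : ∀ i j : ℕ, i + j ≤ k + 1 → ∀ x ∈ Set.Icc (0:ℝ) 1, ∀ y ∈ Set.Icc (0:ℝ) 1,
    |pdM i j E2 x y| ≤ C₀ * ε ^ ((1 : ℝ) - i) * Real.exp (-(1 - x) / ε)
  bound_E3 : ∀ i j : ℕ, i + j ≤ k + 1 → ∀ x ∈ Set.Icc (0:ℝ) 1, ∀ y ∈ Set.Icc (0:ℝ) 1,
    |pdM i j E3 x y| ≤ C₀ * ε ^ ((1 : ℝ) - j) * Real.exp (-(1 - y) / ε)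
  bound_E4 : ∀ i j : ℕ, i + j ≤ k + 1 → ∀ x ∈ Set.Icc (0:ℝ) 1, ∀ y ∈ Set.Icc (0:ℝ) 1,
    |pdM i j E4 x y| ≤ C₀ * ε ^ ((1 : ℝ) - i) * Real.exp (-x / ε)
  bound_E12 : ∀ i j : ℕ, i + j ≤ k + 1 → ∀ x ∈ Set.Icc (0:ℝ) 1, ∀ y ∈ Set.Icc (0:ℝ) 1,
    |pdM i j E12 x y| ≤ C₀ * ε ^ ((1 : ℝ) - i - j) * Real.exp (-(1 - x) / ε) * Real.exp (-y / ε)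
  bound_E23 : ∀ i j : ℕ, i + j ≤ k + 1 → ∀ x ∈ Set.Icc (0:ℝ) 1, ∀ y ∈ Set.Icc (0:ℝ) 1,
    |pdM i j E23 x y| ≤ C₀ * ε ^ ((1 : ℝ) - i - j) * Real.exp (-(1 - x) / ε) * Real.exp (-(1 - y) / ε)
  bound_E34 : ∀ i j : ℕ, i + j ≤ k + 1 → ∀ x ∈ Set.Icc (0:ℝ) 1, ∀ y ∈ Set.Icc (0:ℝ) 1,
    |pdM i j E34 x y| ≤ C₀ * ε ^ ((1 : ℝ) - i - j) * Real.exp (-x / ε) * Real.exp (-(1 - y) / ε)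
  bound_E41 : ∀ i j : ℕ, i + j ≤ k + 1 → ∀ x ∈ Set.Icc (0:ℝ) 1, ∀ y ∈ Set.Icc (0:ℝ) 1,
    |pdM i j E41 x y| ≤ C₀ * ε ^ ((1 : ℝ) - i - j) * Real.exp (-x / ε) * Real.exp (-y / ε)

/-- A discrete weak function on the `N × N` tensor-product mesh with 1D mesh
points `X`. `v0 i j` is the interior value on the element
`[X i, X (i+1)] × [X j, X (j+1)]` (for `i, j < N`); `vbH i j` (resp. `vbV i j`)
is the boundary value on the horizontal edge `[X i, X (i+1)] × {X j}` (for
`i < N`, `j ≤ N`) (resp. the vertical edge `{X i} × [X j, X (j+1)]`, for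
`i ≤ N`, `j < N`), as a function of the running coordinate; `vgH1, vgH2`
(resp. `vgV1, vgV2`) are the two components of the gradient value `𝐯_g`
on horizontal (resp. vertical) edges. -/
structure WGFun where
  v0 : ℕ → ℕ → ℝ → ℝ → ℝ
  vbH : ℕ → ℕ → ℝ → ℝ
  vbV : ℕ → ℕ → ℝ → ℝ
  vgH1 : ℕ → ℕ → ℝ → ℝ
  vgH2 : ℕ → ℕ → ℝ → ℝ
  vgV1 : ℕ → ℕ → ℝ → ℝ
  vgV2 : ℕ → ℕ → ℝ → ℝ

/-- Componentwise difference of discrete weak functions. -/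
def WGFun.sub (u v : WGFun) : WGFun where
  v0 := fun i j x y => u.v0 i j x y - v.v0 i j x y
  vbH := fun i j x => u.vbH i j x - v.vbH i j x
  vbV := fun i j y => u.vbV i j y - v.vbV i j y
  vgH1 := fun i j x => u.vgH1 i j x - v.vgH1 i j x
  vgH2 := fun i j x => u.vgH2 i j x - v.vgH2 i j x
  vgV1 := fun i j y => u.vgV1 i j y - v.vgV1 i j y
  vgV2 := fun i j y => u.vgV2 i j y - v.vgV2 i j y

/-- Membership in the weak Galerkin space `V_N`. -/
def MemVN (k N : ℕ) (v : WGFun) : Prop :=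
  (∀ i < N, ∀ j < N, IsQk k (v.v0 i j)) ∧
  (∀ i < N, ∀ j ≤ N, IsPk k (v.vbH i j) ∧ IsPk k (v.vgH1 i j) ∧ IsPk k (v.vgH2 i j)) ∧
  (∀ i ≤ N, ∀ j < N, IsPk k (v.vbV i j) ∧ IsPk k (v.vgV1 i j) ∧ IsPk k (v.vgV2 i j))

/-- Membership in `V_N⁰`: elements of `V_N` with `v_b = 0` and `𝐯_g·𝐧 = 0` on
all edges contained in `∂Ω`. -/
def MemVN0 (k N : ℕ) (v : WGFun) : Prop :=
  MemVN k N v ∧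
  (∀ i < N, (∀ x : ℝ, v.vbH i 0 x = 0) ∧ (∀ x : ℝ, v.vbH i N x = 0) ∧
            (∀ x : ℝ, v.vgH2 i 0 x = 0) ∧ (∀ x : ℝ, v.vgH2 i N x = 0)) ∧
  (∀ j < N, (∀ y : ℝ, v.vbV 0 j y = 0) ∧ (∀ y : ℝ, v.vbV N j y = 0) ∧
            (∀ y : ℝ, v.vgV1 0 j y = 0) ∧ (∀ y : ℝ, v.vgV1 N j y = 0))

/-- `D i j` is the discrete weak Laplacian `Δ_w v` of `v` on the element
`[X i, X (i+1)] × [X j, X (j+1)]`, for all `i, j < N`, characterized by the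
defining identity (outward normals: bottom `(0,-1)`, top `(0,1)`, left `(-1,0)`,
right `(1,0)`). -/
def IsWeakLap (k N : ℕ) (X : ℕ → ℝ) (v : WGFun) (D : ℕ → ℕ → ℝ → ℝ → ℝ) : Prop :=
  ∀ i < N, ∀ j < N, IsQk k (D i j) ∧
    ∀ φ : ℝ → ℝ → ℝ, IsQk k φ →
      ipT (X i) (X (i+1)) (X j) (X (j+1)) (D i j) φ =
        ipT (X i) (X (i+1)) (X j) (X (j+1)) (v.v0 i j) (lapl φ)
          - ((∫ x in (X i)..(X (i+1)), v.vbH i j x * (-(pd2 φ x (X j))))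
            + (∫ x in (X i)..(X (i+1)), v.vbH i (j+1) x * pd2 φ x (X (j+1)))
            + (∫ y in (X j)..(X (j+1)), v.vbV i j y * (-(pd1 φ (X i) y)))
            + (∫ y in (X j)..(X (j+1)), v.vbV (i+1) j y * pd1 φ (X (i+1)) y))
          + ((∫ x in (X i)..(X (i+1)), (-(v.vgH2 i j x)) * φ x (X j))
            + (∫ x in (X i)..(X (i+1)), v.vgH2 i (j+1) x * φ x (X (j+1)))
            + (∫ y in (X j)..(X (j+1)), (-(v.vgV1 i j y)) * φ (X i) y)
            + (∫ y in (X j)..(X (j+1)), v.vgV1 (i+1) j y * φ (X (i+1)) y))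

/-- `(G1 i j, G2 i j)` is the discrete weak gradient `∇_w v` of `v` on the
element `[X i, X (i+1)] × [X j, X (j+1)]`, for all `i, j < N`, characterized by
the defining identity. -/
def IsWeakGrad (k N : ℕ) (X : ℕ → ℝ) (v : WGFun) (G1 G2 : ℕ → ℕ → ℝ → ℝ → ℝ) : Prop :=
  ∀ i < N, ∀ j < N, IsQk k (G1 i j) ∧ IsQk k (G2 i j) ∧
    ∀ q1 q2 : ℝ → ℝ → ℝ, IsQk k q1 → IsQk k q2 →
      ipT (X i) (X (i+1)) (X j) (X (j+1)) (G1 i j) q1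
        + ipT (X i) (X (i+1)) (X j) (X (j+1)) (G2 i j) q2 =
        -(ipT (X i) (X (i+1)) (X j) (X (j+1)) (v.v0 i j)
            (fun x y => pd1 q1 x y + pd2 q2 x y))
          + ((∫ x in (X i)..(X (i+1)), v.vbH i j x * (-(q2 x (X j))))
            + (∫ x in (X i)..(X (i+1)), v.vbH i (j+1) x * q2 x (X (j+1)))
            + (∫ y in (X j)..(X (j+1)), v.vbV i j y * (-(q1 (X i) y)))
            + (∫ y in (X j)..(X (j+1)), v.vbV (i+1) j y * q1 (X (i+1)) y))

/-- The boundary pairing `⟨u₀ − u_b, v₀ − v_b⟩_{∂T}` on the element `(i,j)`. -/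
def sPair (X : ℕ → ℝ) (u v : WGFun) (i j : ℕ) : ℝ :=
  (∫ x in (X i)..(X (i+1)),
    (u.v0 i j x (X j) - u.vbH i j x) * (v.v0 i j x (X j) - v.vbH i j x))
  + (∫ x in (X i)..(X (i+1)),
    (u.v0 i j x (X (j+1)) - u.vbH i (j+1) x) * (v.v0 i j x (X (j+1)) - v.vbH i (j+1) x))
  + (∫ y in (X j)..(X (j+1)),
    (u.v0 i j (X i) y - u.vbV i j y) * (v.v0 i j (X i) y - v.vbV i j y))
  + (∫ y in (X j)..(X (j+1)),
    (u.v0 i j (X (i+1)) y - u.vbV (i+1) j y) * (v.v0 i j (X (i+1)) y - v.vbV (i+1) j y))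

/-- The boundary pairing `⟨∇u₀ − 𝐮_g, ∇v₀ − 𝐯_g⟩_{∂T}` on the element `(i,j)`. -/
def sPairG (X : ℕ → ℝ) (u v : WGFun) (i j : ℕ) : ℝ :=
  (∫ x in (X i)..(X (i+1)),
    ((pd1 (u.v0 i j) x (X j) - u.vgH1 i j x) * (pd1 (v.v0 i j) x (X j) - v.vgH1 i j x)
      + (pd2 (u.v0 i j) x (X j) - u.vgH2 i j x) * (pd2 (v.v0 i j) x (X j) - v.vgH2 i j x)))
  + (∫ x in (X i)..(X (i+1)),
    ((pd1 (u.v0 i j) x (X (j+1)) - u.vgH1 i (j+1) x) * (pd1 (v.v0 i j) x (X (j+1)) - v.vgH1 i (j+1) x)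
      + (pd2 (u.v0 i j) x (X (j+1)) - u.vgH2 i (j+1) x) * (pd2 (v.v0 i j) x (X (j+1)) - v.vgH2 i (j+1) x)))
  + (∫ y in (X j)..(X (j+1)),
    ((pd1 (u.v0 i j) (X i) y - u.vgV1 i j y) * (pd1 (v.v0 i j) (X i) y - v.vgV1 i j y)
      + (pd2 (u.v0 i j) (X i) y - u.vgV2 i j y) * (pd2 (v.v0 i j) (X i) y - v.vgV2 i j y)))
  + (∫ y in (X j)..(X (j+1)),
    ((pd1 (u.v0 i j) (X (i+1)) y - u.vgV1 (i+1) j y) * (pd1 (v.v0 i j) (X (i+1)) y - v.vgV1 (i+1) j y)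
      + (pd2 (u.v0 i j) (X (i+1)) y - u.vgV2 (i+1) j y) * (pd2 (v.v0 i j) (X (i+1)) y - v.vgV2 (i+1) j y)))

/-- The stabilizer `s(u,v)` with fine mesh width `h` and coarse mesh width `H`. -/
def stab (N : ℕ) (X : ℕ → ℝ) (ε h H : ℝ) (u v : WGFun) : ℝ :=
  ∑ i ∈ Finset.range N, ∑ j ∈ Finset.range N,
    (ε ^ 2 * h⁻¹ * sPairG X u v i j
      + (ε ^ 2 * (h ^ 2)⁻¹ * H⁻¹ + H⁻¹) * sPair X u v i j)

/-- The bilinear form `a(u,v)`, expressed in terms of the discrete weak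
Laplacians `Du, Dv` and weak gradients `(Gu1,Gu2), (Gv1,Gv2)` of `u` and `v`. -/
def aForm (N : ℕ) (X : ℕ → ℝ) (ε h H : ℝ) (u v : WGFun)
    (Du Dv Gu1 Gu2 Gv1 Gv2 : ℕ → ℕ → ℝ → ℝ → ℝ) : ℝ :=
  (∑ i ∈ Finset.range N, ∑ j ∈ Finset.range N,
    (ε ^ 2 * ipT (X i) (X (i+1)) (X j) (X (j+1)) (Du i j) (Dv i j)
      + ipT (X i) (X (i+1)) (X j) (X (j+1)) (Gu1 i j) (Gv1 i j)
      + ipT (X i) (X (i+1)) (X j) (X (j+1)) (Gu2 i j) (Gv2 i j)))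
  + stab N X ε h H u v

/-- `Qu = Q_N u = (Q₀u, Q_b u, 𝐐_g(∇u))`: all components are the corresponding
elementwise / edgewise L²-orthogonal projections of `u`, `u|_e` and `∇u|_e`. -/
def IsQNProj (k N : ℕ) (X : ℕ → ℝ) (u : ℝ → ℝ → ℝ) (Qu : WGFun) : Prop :=
  (∀ i < N, ∀ j < N,
    IsProjT k (X i) (X (i+1)) (X j) (X (j+1)) u (Qu.v0 i j)) ∧
  (∀ i < N, ∀ j ≤ N,
    IsProjE k (X i) (X (i+1)) (fun x => u x (X j)) (Qu.vbH i j) ∧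
    IsProjE k (X i) (X (i+1)) (fun x => pd1 u x (X j)) (Qu.vgH1 i j) ∧
    IsProjE k (X i) (X (i+1)) (fun x => pd2 u x (X j)) (Qu.vgH2 i j)) ∧
  (∀ i ≤ N, ∀ j < N,
    IsProjE k (X j) (X (j+1)) (fun y => u (X i) y) (Qu.vbV i j) ∧
    IsProjE k (X j) (X (j+1)) (fun y => pd1 u (X i) y) (Qu.vgV1 i j) ∧
    IsProjE k (X j) (X (j+1)) (fun y => pd2 u (X i) y) (Qu.vgV2 i j))

/-- `l₁(u,v) = Σ_T ε² ⟨Δu − Q₀Δu, (∇v₀ − 𝐯_g)·𝐧⟩_{∂T}`, where `P i j = Q₀Δu` on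
the element `(i,j)`. -/
def lForm1 (N : ℕ) (X : ℕ → ℝ) (ε : ℝ) (u : ℝ → ℝ → ℝ)
    (P : ℕ → ℕ → ℝ → ℝ → ℝ) (v : WGFun) : ℝ :=
  ∑ i ∈ Finset.range N, ∑ j ∈ Finset.range N, ε ^ 2 *
    ((∫ x in (X i)..(X (i+1)),
        (lapl u x (X j) - P i j x (X j)) * (-(pd2 (v.v0 i j) x (X j) - v.vgH2 i j x)))
      + (∫ x in (X i)..(X (i+1)),
        (lapl u x (X (j+1)) - P i j x (X (j+1)))
          * (pd2 (v.v0 i j) x (X (j+1)) - v.vgH2 i (j+1) x))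
      + (∫ y in (X j)..(X (j+1)),
        (lapl u (X i) y - P i j (X i) y) * (-(pd1 (v.v0 i j) (X i) y - v.vgV1 i j y)))
      + (∫ y in (X j)..(X (j+1)),
        (lapl u (X (i+1)) y - P i j (X (i+1)) y)
          * (pd1 (v.v0 i j) (X (i+1)) y - v.vgV1 (i+1) j y)))

/-- `l₂(u,v) = Σ_T ε² ⟨∇(Δu − Q₀Δu)·𝐧, v₀ − v_b⟩_{∂T}`, where `P i j = Q₀Δu` on
the element `(i,j)`. -/
def lForm2 (N : ℕ) (X : ℕ → ℝ) (ε : ℝ) (u : ℝ → ℝ → ℝ)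
    (P : ℕ → ℕ → ℝ → ℝ → ℝ) (v : WGFun) : ℝ :=
  ∑ i ∈ Finset.range N, ∑ j ∈ Finset.range N, ε ^ 2 *
    ((∫ x in (X i)..(X (i+1)),
        (-(pd2 (fun a b => lapl u a b - P i j a b) x (X j)))
          * (v.v0 i j x (X j) - v.vbH i j x))
      + (∫ x in (X i)..(X (i+1)),
        (pd2 (fun a b => lapl u a b - P i j a b) x (X (j+1)))
          * (v.v0 i j x (X (j+1)) - v.vbH i (j+1) x))
      + (∫ y in (X j)..(X (j+1)),
        (-(pd1 (fun a b => lapl u a b - P i j a b) (X i) y))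
          * (v.v0 i j (X i) y - v.vbV i j y))
      + (∫ y in (X j)..(X (j+1)),
        (pd1 (fun a b => lapl u a b - P i j a b) (X (i+1)) y)
          * (v.v0 i j (X (i+1)) y - v.vbV (i+1) j y)))

/-- `l₃(u,v) = Σ_T ⟨(∇u − 𝐐_N∇u)·𝐧, v₀ − v_b⟩_{∂T}`, where `(P1 i j, P2 i j) =
𝐐_N(∇u)` on the element `(i,j)`. -/
def lForm3 (N : ℕ) (X : ℕ → ℝ) (u : ℝ → ℝ → ℝ)
    (P1 P2 : ℕ → ℕ → ℝ → ℝ → ℝ) (v : WGFun) : ℝ :=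
  ∑ i ∈ Finset.range N, ∑ j ∈ Finset.range N,
    ((∫ x in (X i)..(X (i+1)),
        (-(pd2 u x (X j) - P2 i j x (X j))) * (v.v0 i j x (X j) - v.vbH i j x))
      + (∫ x in (X i)..(X (i+1)),
        (pd2 u x (X (j+1)) - P2 i j x (X (j+1))) * (v.v0 i j x (X (j+1)) - v.vbH i (j+1) x))
      + (∫ y in (X j)..(X (j+1)),
        (-(pd1 u (X i) y - P1 i j (X i) y)) * (v.v0 i j (X i) y - v.vbV i j y))
      + (∫ y in (X j)..(X (j+1)),
        (pd1 u (X (i+1)) y - P1 i j (X (i+1)) y) * (v.v0 i j (X (i+1)) y - v.vbV (i+1) j y)))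


/-!
If `a(v, v) = 0`, every term of the energy vanishes, since all weights are positive on the Shishkin
mesh. On each element this gives `∇_w v = 0`, `v₀ = v_b` and `∇v₀ = 𝐯_g` on the four edges.
Testing the weak gradient with `∇v₀` and integrating by parts then yields `‖∇v₀‖²_T = 0`, so `v₀`
is constant on each element. Neighbouring constants are equal through `v_b` on the shared edge and
`v_b = 0` on `∂Ω`, so `v₀ = 0`; finally `v_b` and `𝐯_g` are traces of `v₀` and `∇v₀`, hence zero.
-/

open Set

section Polynomials

variable {k : ℕ} {v : ℝ → ℝ → ℝ}

lemma IsQk.exists_eq_sum (h : IsQk k v) :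
    ∃ (s : Finset (Fin 2 →₀ ℕ)) (c : (Fin 2 →₀ ℕ) → ℝ), (∀ m ∈ s, m 0 ≤ k ∧ m 1 ≤ k) ∧
      ∀ x y, v x y = ∑ m ∈ s, c m * x ^ m 0 * y ^ m 1 := by
  obtain ⟨p, hdeg, hev⟩ := h
  refine ⟨p.support, p.coeff, fun m hm => ⟨(MvPolynomial.monomial_le_degreeOf 0 hm).trans (hdeg 0),
    (MvPolynomial.monomial_le_degreeOf 1 hm).trans (hdeg 1)⟩, fun x y => ?_⟩
  simp [hev, MvPolynomial.eval_eq', Fin.prod_univ_two, mul_assoc]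

-- The exponents are arbitrary functions of the index, so that partial derivatives keep this shape.
lemma isQk_of_eq_sum {ι : Type*} (s : Finset ι) (c : ι → ℝ) (a b : ι → ℕ)
    (hab : ∀ m ∈ s, a m ≤ k ∧ b m ≤ k) (hv : ∀ x y, v x y = ∑ m ∈ s, c m * x ^ a m * y ^ b m) :
    IsQk k v := by
  classical
  refine ⟨∑ m ∈ s, MvPolynomial.monomial (Finsupp.single 0 (a m) + Finsupp.single 1 (b m)) (c m),
    fun n => MvPolynomial.degreeOf_le_iff.mpr fun d hd => ?_, fun x y => ?_⟩
  · obtain ⟨m, hm, hd⟩ := Finset.mem_biUnion.mp (MvPolynomial.support_sum hd)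
    rw [Finset.mem_singleton.mp (MvPolynomial.support_monomial_subset hd)]
    fin_cases n <;> simp [hab m hm]
  · simp [hv, MvPolynomial.eval_monomial, mul_assoc]

lemma IsQk.continuous (h : IsQk k v) : Continuous (Function.uncurry v) := by
  obtain ⟨p, -, hev⟩ := h
  have : Function.uncurry v = fun z : ℝ × ℝ => MvPolynomial.eval ![z.1, z.2] p :=
    funext fun z => hev z.1 z.2
  rw [this]
  exact (MvPolynomial.continuous_eval p).comp (by fun_prop)

lemma IsQk.differentiable_fst (h : IsQk k v) (y : ℝ) : Differentiable ℝ fun x => v x y := by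
  obtain ⟨s, c, -, hv⟩ := h.exists_eq_sum
  simp only [hv]
  fun_prop

lemma IsQk.differentiable_snd (h : IsQk k v) (x : ℝ) : Differentiable ℝ fun y => v x y := by
  obtain ⟨s, c, -, hv⟩ := h.exists_eq_sum
  simp only [hv]
  fun_prop

lemma IsQk.pd1 (h : IsQk k v) : IsQk k (pd1 v) := by
  obtain ⟨s, c, hs, hv⟩ := h.exists_eq_sum
  refine isQk_of_eq_sum s (fun m => c m * m 0) (fun m => m 0 - 1) (fun m => m 1)
    (fun m hm => ⟨(Nat.sub_le _ _).trans (hs m hm).1, (hs m hm).2⟩) fun x y => ?_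
  have hd : HasDerivAt (fun t => ∑ m ∈ s, c m * t ^ m 0 * y ^ m 1)
      (∑ m ∈ s, c m * (m 0 * x ^ (m 0 - 1)) * y ^ m 1) x :=
    HasDerivAt.fun_sum fun m _ => ((hasDerivAt_pow _ x).const_mul _).mul_const _
  simp only [_root_.pd1, hv, hd.deriv]
  exact Finset.sum_congr rfl fun m _ => by ring

lemma IsQk.pd2 (h : IsQk k v) : IsQk k (pd2 v) := by
  obtain ⟨s, c, hs, hv⟩ := h.exists_eq_sum
  refine isQk_of_eq_sum s (fun m => c m * m 1) (fun m => m 0) (fun m => m 1 - 1)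
    (fun m hm => ⟨(hs m hm).1, (Nat.sub_le _ _).trans (hs m hm).2⟩) fun x y => ?_
  have hd : HasDerivAt (fun t => ∑ m ∈ s, c m * x ^ m 0 * t ^ m 1)
      (∑ m ∈ s, c m * x ^ m 0 * (m 1 * y ^ (m 1 - 1))) y :=
    HasDerivAt.fun_sum fun m _ => (hasDerivAt_pow _ y).const_mul _
  simp only [_root_.pd2, hv, hd.deriv]
  exact Finset.sum_congr rfl fun m _ => by ring

lemma IsPk.continuous {f : ℝ → ℝ} (h : IsPk k f) : Continuous f := by
  obtain ⟨p, -, hp⟩ := h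
  rw [funext hp]
  exact p.continuous

end Polynomials

section Integrals

open intervalIntegral

variable {x0 x1 y0 y1 : ℝ}

lemma eqOn_zero_of_integral_eq_zero {f : ℝ → ℝ} {a b : ℝ} (hf : Continuous f) (hab : a < b)
    (hnn : ∀ x, 0 ≤ f x) (h0 : ∫ x in a..b, f x = 0) : ∀ x ∈ Icc a b, f x = 0 := by
  have hae : f =ᵐ[MeasureTheory.volume.restrict (Ioc a b)] 0 :=
    (integral_eq_zero_iff_of_le_of_nonneg_ae hab.le (Filter.Eventually.of_forall hnn)
      (hf.intervalIntegrable a b)).mp h0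
  rw [Measure.restrict_congr_set Ioc_ae_eq_Icc] at hae
  exact fun x hx => Measure.eqOn_Icc_of_ae_eq volume hab.ne hae hf.continuousOn
    continuousOn_const hx

lemma ipT_self_nonneg (hx : x0 ≤ x1) (hy : y0 ≤ y1) (f : ℝ → ℝ → ℝ) :
    0 ≤ ipT x0 x1 y0 y1 f f :=
  integral_nonneg hx fun _ _ => integral_nonneg hy fun _ _ => mul_self_nonneg _

lemma eqOn_zero_of_ipT_self_eq_zero {f : ℝ → ℝ → ℝ} (hf : Continuous (Function.uncurry f))
    (hx : x0 < x1) (hy : y0 < y1) (h0 : ipT x0 x1 y0 y1 f f = 0) :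
    ∀ x ∈ Icc x0 x1, ∀ y ∈ Icc y0 y1, f x y = 0 := by
  have hrow := eqOn_zero_of_integral_eq_zero
    (by fun_prop : Continuous fun x => ∫ y in y0..y1, f x y * f x y) hx
    (fun x => integral_nonneg hy.le fun y _ => mul_self_nonneg _) h0
  intro x hx' y hy'
  exact mul_self_eq_zero.mp (eqOn_zero_of_integral_eq_zero (by fun_prop) hy
    (fun y => mul_self_nonneg _) (hrow x hx') y hy')

lemma ipT_eq_zero_of_eqOn_zero {f : ℝ → ℝ → ℝ} (hx : x0 ≤ x1) (hy : y0 ≤ y1) (g : ℝ → ℝ → ℝ)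
    (hf : ∀ x ∈ Icc x0 x1, ∀ y ∈ Icc y0 y1, f x y = 0) : ipT x0 x1 y0 y1 f g = 0 := by
  refine (integral_congr fun x hx' => ?_).trans integral_zero
  refine (integral_congr fun y hy' => ?_).trans integral_zero
  rw [uIcc_of_le hx] at hx'
  rw [uIcc_of_le hy] at hy'
  simp [hf x hx' y hy']

lemma ipT_eq_ipT_swap {f g : ℝ → ℝ → ℝ} (hf : Continuous (Function.uncurry f))
    (hg : Continuous (Function.uncurry g)) (hx : x0 ≤ x1) (hy : y0 ≤ y1) :
    ipT x0 x1 y0 y1 f g = ipT y0 y1 x0 x1 (fun y x => f x y) (fun y x => g x y) := by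
  have hint : Integrable (Function.uncurry fun x y => f x y * g x y)
      ((volume.restrict (Ioc x0 x1)).prod (volume.restrict (Ioc y0 y1))) := by
    rw [Measure.prod_restrict]
    refine IntegrableOn.mono_set ?_ (prod_mono Ioc_subset_Icc_self Ioc_subset_Icc_self)
    exact (hf.mul hg).continuousOn.integrableOn_compact (isCompact_Icc.prod isCompact_Icc)
  simp only [ipT, integral_of_le hx, integral_of_le hy]
  exact integral_integral_swap hint

lemma ipT_add_right {f g₁ g₂ : ℝ → ℝ → ℝ} (hf : Continuous (Function.uncurry f))
    (hg₁ : Continuous (Function.uncurry g₁)) (hg₂ : Continuous (Function.uncurry g₂)) :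
    ipT x0 x1 y0 y1 f (fun x y => g₁ x y + g₂ x y)
      = ipT x0 x1 y0 y1 f g₁ + ipT x0 x1 y0 y1 f g₂ := by
  have hi₁ : Continuous fun x => ∫ y in y0..y1, f x y * g₁ x y := by fun_prop
  have hi₂ : Continuous fun x => ∫ y in y0..y1, f x y * g₂ x y := by fun_prop
  rw [ipT, ipT, ipT, ← integral_add (hi₁.intervalIntegrable _ _) (hi₂.intervalIntegrable _ _)]
  refine integral_congr fun x _ => ?_
  simp only [mul_add]
  exact integral_add ((by fun_prop : Continuous fun y => f x y * g₁ x y).intervalIntegrable _ _)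
    ((by fun_prop : Continuous fun y => f x y * g₂ x y).intervalIntegrable _ _)

end Integrals

section IntegrationByParts

open intervalIntegral

variable {k : ℕ} {x0 x1 y0 y1 : ℝ} {f g : ℝ → ℝ → ℝ}

lemma IsQk.swap (h : IsQk k f) : IsQk k fun y x => f x y := by
  obtain ⟨s, c, hs, hf⟩ := h.exists_eq_sum
  exact isQk_of_eq_sum s c (fun m => m 1) (fun m => m 0) (fun m hm => (hs m hm).symm)
    fun y x => (hf x y).trans (Finset.sum_congr rfl fun m _ => by ring)

lemma ipT_pd2_add_ipT_pd2 (hf : IsQk k f) (hg : IsQk k g) :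
    ipT x0 x1 y0 y1 f (pd2 g) + ipT x0 x1 y0 y1 (pd2 f) g
      = (∫ x in x0..x1, f x y1 * g x y1) - ∫ x in x0..x1, f x y0 * g x y0 := by
  have hc₁ := hf.continuous
  have hc₂ := hg.continuous
  have hc₃ := hf.pd2.continuous
  have hc₄ := hg.pd2.continuous
  have hrow : ∀ x, (∫ y in y0..y1, f x y * pd2 g x y) + ∫ y in y0..y1, pd2 f x y * g x y
      = f x y1 * g x y1 - f x y0 * g x y0 := fun x => by
    rw [← integral_add
      ((by fun_prop : Continuous fun y => f x y * pd2 g x y).intervalIntegrable _ _)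
      ((by fun_prop : Continuous fun y => pd2 f x y * g x y).intervalIntegrable _ _)]
    refine integral_eq_sub_of_hasDerivAt (f := fun y => f x y * g x y) (fun y _ => ?_)
      ((by fun_prop : Continuous fun y => f x y * pd2 g x y + pd2 f x y * g x y).intervalIntegrable
        _ _)
    rw [add_comm]
    exact ((hf.differentiable_snd x y).hasDerivAt).fun_mul (hg.differentiable_snd x y).hasDerivAt
  have hi₁ : Continuous fun x => ∫ y in y0..y1, f x y * pd2 g x y := by fun_prop
  have hi₂ : Continuous fun x => ∫ y in y0..y1, pd2 f x y * g x y := by fun_prop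
  rw [ipT, ipT, ← integral_add (hi₁.intervalIntegrable _ _) (hi₂.intervalIntegrable _ _),
    ← integral_sub ((by fun_prop : Continuous fun x => f x y1 * g x y1).intervalIntegrable _ _)
      ((by fun_prop : Continuous fun x => f x y0 * g x y0).intervalIntegrable _ _)]
  exact integral_congr fun x _ => hrow x

lemma ipT_pd1_add_ipT_pd1 (hf : IsQk k f) (hg : IsQk k g) (hx : x0 ≤ x1) (hy : y0 ≤ y1) :
    ipT x0 x1 y0 y1 f (pd1 g) + ipT x0 x1 y0 y1 (pd1 f) g
      = (∫ y in y0..y1, f x1 y * g x1 y) - ∫ y in y0..y1, f x0 y * g x0 y := by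
  rw [ipT_eq_ipT_swap hf.continuous hg.pd1.continuous hx hy,
    ipT_eq_ipT_swap hf.pd1.continuous hg.continuous hx hy]
  exact ipT_pd2_add_ipT_pd2 hf.swap hg.swap

end IntegrationByParts

section Traces

open intervalIntegral

lemma eqOn_of_integral_sub_mul_self_eq_zero {f g : ℝ → ℝ} {a b : ℝ} (hf : Continuous f)
    (hg : Continuous g) (hab : a < b) (h : ∫ x in a..b, (f x - g x) * (f x - g x) = 0) :
    ∀ x ∈ Icc a b, f x = g x := fun x hx => sub_eq_zero.mp <| mul_self_eq_zero.mp <|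
  eqOn_zero_of_integral_eq_zero (by fun_prop) hab (fun _ => mul_self_nonneg _) h x hx

lemma eqOn_of_integral_sub_mul_self_add_eq_zero {f₁ f₂ g₁ g₂ : ℝ → ℝ} {a b : ℝ}
    (hf₁ : Continuous f₁) (hf₂ : Continuous f₂) (hg₁ : Continuous g₁) (hg₂ : Continuous g₂)
    (hab : a < b)
    (h : ∫ x in a..b, ((f₁ x - g₁ x) * (f₁ x - g₁ x) + (f₂ x - g₂ x) * (f₂ x - g₂ x)) = 0) :
    ∀ x ∈ Icc a b, f₁ x = g₁ x ∧ f₂ x = g₂ x := fun x hx => by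
  simpa only [mul_self_add_mul_self_eq_zero, sub_eq_zero] using
    eqOn_zero_of_integral_eq_zero (by fun_prop) hab
      (fun _ => add_nonneg (mul_self_nonneg _) (mul_self_nonneg _)) h x hx

def TracesMatch (X : ℕ → ℝ) (v : WGFun) (i j : ℕ) : Prop :=
  (∀ l ∈ ({j, j + 1} : Set ℕ), ∀ x ∈ Icc (X i) (X (i + 1)),
    v.v0 i j x (X l) = v.vbH i l x ∧ pd1 (v.v0 i j) x (X l) = v.vgH1 i l x ∧
      pd2 (v.v0 i j) x (X l) = v.vgH2 i l x) ∧
  (∀ l ∈ ({i, i + 1} : Set ℕ), ∀ y ∈ Icc (X j) (X (j + 1)),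
    v.v0 i j (X l) y = v.vbV l j y ∧ pd1 (v.v0 i j) (X l) y = v.vgV1 l j y ∧
      pd2 (v.v0 i j) (X l) y = v.vgV2 l j y)

variable {k N : ℕ} {X : ℕ → ℝ} {v : WGFun} {i j : ℕ}

lemma sPair_self_nonneg (hx : X i ≤ X (i + 1)) (hy : X j ≤ X (j + 1)) : 0 ≤ sPair X v v i j := by
  unfold sPair
  refine add_nonneg (add_nonneg (add_nonneg ?_ ?_) ?_) ?_ <;>
    exact integral_nonneg (by assumption) fun _ _ => mul_self_nonneg _

lemma sPairG_self_nonneg (hx : X i ≤ X (i + 1)) (hy : X j ≤ X (j + 1)) :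
    0 ≤ sPairG X v v i j := by
  unfold sPairG
  refine add_nonneg (add_nonneg (add_nonneg ?_ ?_) ?_) ?_ <;>
    exact integral_nonneg (by assumption) fun _ _ =>
      add_nonneg (mul_self_nonneg _) (mul_self_nonneg _)

lemma eq_zero_of_add_add_add_eq_zero {a b c d : ℝ} (ha : 0 ≤ a) (hb : 0 ≤ b) (hc : 0 ≤ c)
    (hd : 0 ≤ d) (h : a + b + c + d = 0) : a = 0 ∧ b = 0 ∧ c = 0 ∧ d = 0 :=
  ⟨by linarith, by linarith, by linarith, by linarith⟩

lemma tracesMatch_of_sPair_eq_zero (hv : MemVN k N v) (hi : i < N) (hj : j < N)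
    (hx : X i < X (i + 1)) (hy : X j < X (j + 1)) (hs : sPair X v v i j = 0)
    (hsG : sPairG X v v i j = 0) : TracesMatch X v i j := by
  obtain ⟨hv0, hH, hV⟩ := hv
  have hu := hv0 i hi j hj
  have hu₀ := hu.continuous
  have hu₁ := hu.pd1.continuous
  have hu₂ := hu.pd2.continuous
  obtain ⟨hbB, hgB₁, hgB₂⟩ := hH i hi j hj.le
  obtain ⟨hbT, hgT₁, hgT₂⟩ := hH i hi (j + 1) hj
  obtain ⟨hbL, hgL₁, hgL₂⟩ := hV i hi.le j hj
  obtain ⟨hbR, hgR₁, hgR₂⟩ := hV (i + 1) hi j hj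
  obtain ⟨zB, zT, zL, zR⟩ := eq_zero_of_add_add_add_eq_zero
    (integral_nonneg hx.le fun _ _ => mul_self_nonneg _)
    (integral_nonneg hx.le fun _ _ => mul_self_nonneg _)
    (integral_nonneg hy.le fun _ _ => mul_self_nonneg _)
    (integral_nonneg hy.le fun _ _ => mul_self_nonneg _) hs
  obtain ⟨zGB, zGT, zGL, zGR⟩ := eq_zero_of_add_add_add_eq_zero
    (integral_nonneg hx.le fun _ _ => add_nonneg (mul_self_nonneg _) (mul_self_nonneg _))
    (integral_nonneg hx.le fun _ _ => add_nonneg (mul_self_nonneg _) (mul_self_nonneg _))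
    (integral_nonneg hy.le fun _ _ => add_nonneg (mul_self_nonneg _) (mul_self_nonneg _))
    (integral_nonneg hy.le fun _ _ => add_nonneg (mul_self_nonneg _) (mul_self_nonneg _)) hsG
  have eB := eqOn_of_integral_sub_mul_self_eq_zero (by fun_prop) hbB.continuous hx zB
  have eT := eqOn_of_integral_sub_mul_self_eq_zero (by fun_prop) hbT.continuous hx zT
  have eL := eqOn_of_integral_sub_mul_self_eq_zero (by fun_prop) hbL.continuous hy zL
  have eR := eqOn_of_integral_sub_mul_self_eq_zero (by fun_prop) hbR.continuous hy zR
  have eGB := eqOn_of_integral_sub_mul_self_add_eq_zero (by fun_prop) (by fun_prop)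
    hgB₁.continuous hgB₂.continuous hx zGB
  have eGT := eqOn_of_integral_sub_mul_self_add_eq_zero (by fun_prop) (by fun_prop)
    hgT₁.continuous hgT₂.continuous hx zGT
  have eGL := eqOn_of_integral_sub_mul_self_add_eq_zero (by fun_prop) (by fun_prop)
    hgL₁.continuous hgL₂.continuous hy zGL
  have eGR := eqOn_of_integral_sub_mul_self_add_eq_zero (by fun_prop) (by fun_prop)
    hgR₁.continuous hgR₂.continuous hy zGR
  refine ⟨fun l hl x hx' => ?_, fun l hl y hy' => ?_⟩
  · rcases hl with rfl | rfl
    · exact ⟨eB x hx', eGB x hx'⟩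
    · exact ⟨eT x hx', eGT x hx'⟩
  · rcases hl with rfl | rfl
    · exact ⟨eL y hy', eGL y hy'⟩
    · exact ⟨eR y hy', eGR y hy'⟩

end Traces

section Element

open intervalIntegral

variable {k N : ℕ} {X : ℕ → ℝ} {v : WGFun} {i j : ℕ}

lemma integral_mul_congr_of_eqOn {f g : ℝ → ℝ} {a b : ℝ} (φ : ℝ → ℝ) (hab : a ≤ b)
    (h : ∀ x ∈ Icc a b, f x = g x) : ∫ x in a..b, f x * φ x = ∫ x in a..b, g x * φ x :=
  integral_congr fun x hx => by
    rw [uIcc_of_le hab] at hx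
    simp only [h x hx]

/-- Testing the weak gradient with `𝐪 = ∇v₀` and integrating by parts gives
`(∇_w v, ∇v₀)_T = ‖∇v₀‖²_T` once the traces of `v₀` are `v_b`. -/
lemma gradient_eq_zero_of_weakGrad_eq_zero (hu : IsQk k (v.v0 i j)) (hi : i < N) (hj : j < N)
    (hx : X i < X (i + 1)) (hy : X j < X (j + 1)) (htr : TracesMatch X v i j)
    {G1 G2 : ℕ → ℕ → ℝ → ℝ → ℝ} (hG : IsWeakGrad k N X v G1 G2)
    (hG₁ : ipT (X i) (X (i + 1)) (X j) (X (j + 1)) (G1 i j) (G1 i j) = 0)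
    (hG₂ : ipT (X i) (X (i + 1)) (X j) (X (j + 1)) (G2 i j) (G2 i j) = 0) :
    ∀ x ∈ Icc (X i) (X (i + 1)), ∀ y ∈ Icc (X j) (X (j + 1)),
      pd1 (v.v0 i j) x y = 0 ∧ pd2 (v.v0 i j) x y = 0 := by
  set u := v.v0 i j
  obtain ⟨hQ₁, hQ₂, hid⟩ := hG i hi j hj
  have h := hid (pd1 u) (pd2 u) hu.pd1 hu.pd2
  rw [ipT_eq_zero_of_eqOn_zero hx.le hy.le _
      (eqOn_zero_of_ipT_self_eq_zero hQ₁.continuous hx hy hG₁),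
    ipT_eq_zero_of_eqOn_zero hx.le hy.le _
      (eqOn_zero_of_ipT_self_eq_zero hQ₂.continuous hx hy hG₂),
    ipT_add_right hu.continuous hu.pd1.pd1.continuous hu.pd2.pd2.continuous] at h
  simp only [mul_neg, intervalIntegral.integral_neg] at h
  have eB := integral_mul_congr_of_eqOn (fun x => pd2 u x (X j)) hx.le
    fun x hx' => (htr.1 j (by simp) x hx').1
  have eT := integral_mul_congr_of_eqOn (fun x => pd2 u x (X (j + 1))) hx.le
    fun x hx' => (htr.1 (j + 1) (by simp) x hx').1
  have eL := integral_mul_congr_of_eqOn (fun y => pd1 u (X i) y) hy.le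
    fun y hy' => (htr.2 i (by simp) y hy').1
  have eR := integral_mul_congr_of_eqOn (fun y => pd1 u (X (i + 1)) y) hy.le
    fun y hy' => (htr.2 (i + 1) (by simp) y hy').1
  have ibp₁ := ipT_pd1_add_ipT_pd1 hu hu.pd1 hx.le hy.le
  have ibp₂ := ipT_pd2_add_ipT_pd2 (x0 := X i) (x1 := X (i + 1)) (y0 := X j) (y1 := X (j + 1))
    hu hu.pd2
  have n₁ := ipT_self_nonneg hx.le hy.le (pd1 u)
  have n₂ := ipT_self_nonneg hx.le hy.le (pd2 u)
  have z₁ : ipT (X i) (X (i + 1)) (X j) (X (j + 1)) (pd1 u) (pd1 u) = 0 := by linarith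
  have z₂ : ipT (X i) (X (i + 1)) (X j) (X (j + 1)) (pd2 u) (pd2 u) = 0 := by linarith
  exact fun x hx' y hy' => ⟨eqOn_zero_of_ipT_self_eq_zero hu.pd1.continuous hx hy z₁ x hx' y hy',
    eqOn_zero_of_ipT_self_eq_zero hu.pd2.continuous hx hy z₂ x hx' y hy'⟩

lemma eq_of_pd1_eq_zero {u : ℝ → ℝ → ℝ} {a b y : ℝ} (hu : Differentiable ℝ fun x => u x y)
    (h : ∀ x ∈ Icc a b, pd1 u x y = 0) : ∀ x ∈ Icc a b, u x y = u a y :=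
  constant_of_has_deriv_right_zero hu.continuous.continuousOn fun x hx => by
    have hd : HasDerivWithinAt (fun x => u x y) (pd1 u x y) (Ici x) x :=
      (hu x).hasDerivAt.hasDerivWithinAt
    rwa [h x (Ico_subset_Icc_self hx)] at hd

end Element

section Mesh

variable {N : ℕ} {lam : ℝ}

lemma meshPt_of_le_quarter {i : ℕ} (hi : i ≤ N / 4) : meshPt N lam i = i * (4 * lam / N) := by
  simp [meshPt, hi]

-- Since `4 ∣ N`, the three affine pieces of `meshPt` agree at the breakpoints `N / 4` and
-- `3 * (N / 4)`.
lemma meshPt_of_mem_middle (hN4 : 4 ∣ N) (hN : 0 < N) {i : ℕ} (hi₁ : N / 4 ≤ i)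
    (hi₂ : i ≤ 3 * (N / 4)) :
    meshPt N lam i = lam + ((i : ℝ) - (N / 4 : ℕ)) * (2 * (1 - 2 * lam) / N) := by
  obtain ⟨n, rfl⟩ := hN4
  have hn : (n : ℝ) ≠ 0 := by norm_cast; omega
  rcases hi₁.eq_or_lt with rfl | hlt
  · simp only [meshPt, le_refl, if_true, Nat.mul_div_cancel_left n (by norm_num : 0 < 4)]
    field_simp
    push_cast
    ring
  · simp only [meshPt, hlt.not_ge, hi₂, if_false, if_true]

lemma meshPt_of_three_quarter_le (hN4 : 4 ∣ N) (hN : 0 < N) {i : ℕ} (hi : 3 * (N / 4) ≤ i) :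
    meshPt N lam i = 1 - lam + ((i : ℝ) - (3 * (N / 4) : ℕ)) * (4 * lam / N) := by
  obtain ⟨n, rfl⟩ := hN4
  have hn : 0 < n := by omega
  rcases hi.eq_or_lt with rfl | hlt
  · rw [meshPt_of_mem_middle ⟨n, rfl⟩ hN (by omega) le_rfl]
    simp only [Nat.mul_div_cancel_left n (by norm_num : 0 < 4)]
    field_simp
    push_cast
    ring
  · simp only [meshPt, show ¬ i ≤ 4 * n / 4 by omega, hlt.not_ge, if_false]

lemma meshPt_strictMono (hN4 : 4 ∣ N) (hN : 0 < N) (hl₀ : 0 < lam) (hl₁ : lam < 1 / 2) :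
    StrictMono (meshPt N lam) := by
  have hh : 0 < 4 * lam / N := by positivity
  have hH : 0 < 2 * (1 - 2 * lam) / N := div_pos (by linarith) (by positivity)
  refine strictMono_nat_of_lt_succ fun i => ?_
  rcases lt_or_ge i (N / 4) with hi | hi
  · rw [meshPt_of_le_quarter hi.le, meshPt_of_le_quarter hi]
    push_cast
    linarith
  rcases lt_or_ge i (3 * (N / 4)) with hi' | hi'
  · rw [meshPt_of_mem_middle hN4 hN hi hi'.le, meshPt_of_mem_middle hN4 hN (by omega) hi']
    push_cast
    linarith
  · rw [meshPt_of_three_quarter_le hN4 hN hi', meshPt_of_three_quarter_le hN4 hN (by omega)]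
    push_cast
    linarith

end Mesh

section Shishkin

variable {k N : ℕ} {ε : ℝ}

lemma shLam_pos (hN : 1 < N) (hε : 0 < ε) : 0 < shLam k N ε :=
  mul_pos (by positivity) (Real.log_pos (by exact_mod_cast hN))

lemma shPt_strictMono (hN : 4 ≤ N) (hN4 : 4 ∣ N) (hε : 0 < ε) (hlam : shLam k N ε ≤ 1 / 4) :
    StrictMono (shPt k N ε) :=
  meshPt_strictMono hN4 (by omega) (shLam_pos (by omega) hε) (by linarith)

lemma shH_pos (hN : 1 < N) (hε : 0 < ε) : 0 < shH k N ε := by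
  have := shLam_pos (k := k) hN hε
  unfold shH
  positivity

lemma shHc_pos (hN : 0 < N) (hlam : shLam k N ε < 1 / 2) : 0 < shHc k N ε :=
  div_pos (by linarith) (by positivity)

end Shishkin

section EnergyZero

variable {N : ℕ} {X : ℕ → ℝ} {v : WGFun}

lemma eq_zero_of_sum_sum_eq_zero {f : ℕ → ℕ → ℝ} (hf : ∀ i < N, ∀ j < N, 0 ≤ f i j)
    (h : ∑ i ∈ Finset.range N, ∑ j ∈ Finset.range N, f i j = 0) :
    ∀ i < N, ∀ j < N, f i j = 0 := fun i hi j hj => by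
  have hrow := (Finset.sum_eq_zero_iff_of_nonneg fun i hi => Finset.sum_nonneg fun j hj =>
    hf i (Finset.mem_range.mp hi) j (Finset.mem_range.mp hj)).mp h i (Finset.mem_range.mpr hi)
  exact (Finset.sum_eq_zero_iff_of_nonneg fun j hj => hf i hi j (Finset.mem_range.mp hj)).mp hrow
    j (Finset.mem_range.mpr hj)

lemma terms_eq_zero_of_aForm_self_eq_zero {ε h H : ℝ} {D G1 G2 : ℕ → ℕ → ℝ → ℝ → ℝ}
    (hX : ∀ i < N, X i ≤ X (i + 1)) (hε : ε ≠ 0) (hh : 0 < h) (hH : 0 < H)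
    (h0 : aForm N X ε h H v v D D G1 G2 G1 G2 = 0) :
    ∀ i < N, ∀ j < N,
      ipT (X i) (X (i + 1)) (X j) (X (j + 1)) (G1 i j) (G1 i j) = 0 ∧
      ipT (X i) (X (i + 1)) (X j) (X (j + 1)) (G2 i j) (G2 i j) = 0 ∧
      sPairG X v v i j = 0 ∧ sPair X v v i j = 0 := by
  have c₁ : 0 < ε ^ 2 * h⁻¹ := by positivity
  have c₂ : 0 < ε ^ 2 * (h ^ 2)⁻¹ * H⁻¹ + H⁻¹ := by positivity
  have hnn : ∀ i < N, ∀ j < N,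
      0 ≤ ε ^ 2 * ipT (X i) (X (i + 1)) (X j) (X (j + 1)) (D i j) (D i j) ∧
      0 ≤ ipT (X i) (X (i + 1)) (X j) (X (j + 1)) (G1 i j) (G1 i j) ∧
      0 ≤ ipT (X i) (X (i + 1)) (X j) (X (j + 1)) (G2 i j) (G2 i j) ∧
      0 ≤ ε ^ 2 * h⁻¹ * sPairG X v v i j ∧
      0 ≤ (ε ^ 2 * (h ^ 2)⁻¹ * H⁻¹ + H⁻¹) * sPair X v v i j := fun i hi j hj =>
    ⟨mul_nonneg (sq_nonneg ε) (ipT_self_nonneg (hX i hi) (hX j hj) _),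
      ipT_self_nonneg (hX i hi) (hX j hj) _, ipT_self_nonneg (hX i hi) (hX j hj) _,
      mul_nonneg c₁.le (sPairG_self_nonneg (hX i hi) (hX j hj)),
      mul_nonneg c₂.le (sPair_self_nonneg (hX i hi) (hX j hj))⟩
  unfold aForm stab at h0
  simp only [← Finset.sum_add_distrib] at h0
  have hz := eq_zero_of_sum_sum_eq_zero (fun i hi j hj => by
    obtain ⟨n₀, n₁, n₂, n₃, n₄⟩ := hnn i hi j hj
    linarith) h0
  intro i hi j hj
  obtain ⟨n₀, n₁, n₂, n₃, n₄⟩ := hnn i hi j hj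
  have hzij := hz i hi j hj
  exact ⟨by linarith, by linarith,
    (mul_eq_zero.mp (by linarith : ε ^ 2 * h⁻¹ * sPairG X v v i j = 0)).resolve_left c₁.ne',
    (mul_eq_zero.mp (by linarith : (ε ^ 2 * (h ^ 2)⁻¹ * H⁻¹ + H⁻¹) * sPair X v v i j = 0)
      ).resolve_left c₂.ne'⟩

end EnergyZero

section Propagation

variable {k N : ℕ} {X : ℕ → ℝ} {v : WGFun}

lemma forall_le_of_forall_mem_pair {P : ℕ → Prop} (hN : 0 < N)
    (h : ∀ j < N, ∀ l ∈ ({j, j + 1} : Set ℕ), P l) : ∀ j ≤ N, P j := by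
  intro j hj
  rcases hj.lt_or_eq with hj | rfl
  · exact h j hj j (by simp)
  · obtain ⟨m, rfl⟩ : ∃ m, j = m + 1 := ⟨j - 1, by omega⟩
    exact h m (by omega) (m + 1) (by simp)

lemma v0_eq_zero_of_tracesMatch (hX : ∀ i < N, X i ≤ X (i + 1))
    (hbd : ∀ j < N, ∀ y, v.vbV 0 j y = 0) (htr : ∀ i < N, ∀ j < N, TracesMatch X v i j)
    (hconst : ∀ i < N, ∀ j < N, ∀ x ∈ Icc (X i) (X (i + 1)), ∀ y ∈ Icc (X j) (X (j + 1)),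
      v.v0 i j x y = v.v0 i j (X i) y) :
    ∀ i < N, ∀ j < N, ∀ x ∈ Icc (X i) (X (i + 1)), ∀ y ∈ Icc (X j) (X (j + 1)),
      v.v0 i j x y = 0 := by
  intro i
  induction i with
  | zero =>
    intro hi j hj x hx y hy
    rw [hconst 0 hi j hj x hx y hy, ((htr 0 hi j hj).2 0 (by simp) y hy).1, hbd j hj y]
  | succ n ih =>
    intro hi j hj x hx y hy
    rw [hconst (n + 1) hi j hj x hx y hy, ((htr (n + 1) hi j hj).2 (n + 1) (by simp) y hy).1,
      ← ((htr n (by omega) j hj).2 (n + 1) (by simp) y hy).1]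
    exact ih (by omega) j hj _ ⟨hX n (by omega), le_rfl⟩ y hy

lemma eq_zero_of_tracesMatch_of_gradient_eq_zero (hv : MemVN0 k N v) (hX : ∀ i < N, X i ≤ X (i + 1))
    (htr : ∀ i < N, ∀ j < N, TracesMatch X v i j)
    (hgrad : ∀ i < N, ∀ j < N, ∀ x ∈ Icc (X i) (X (i + 1)), ∀ y ∈ Icc (X j) (X (j + 1)),
      pd1 (v.v0 i j) x y = 0 ∧ pd2 (v.v0 i j) x y = 0) :
    (∀ i < N, ∀ j < N, ∀ x ∈ Icc (X i) (X (i + 1)), ∀ y ∈ Icc (X j) (X (j + 1)),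
      v.v0 i j x y = 0) ∧
    (∀ i < N, ∀ j ≤ N, ∀ x ∈ Icc (X i) (X (i + 1)),
      v.vbH i j x = 0 ∧ v.vgH1 i j x = 0 ∧ v.vgH2 i j x = 0) ∧
    (∀ i ≤ N, ∀ j < N, ∀ y ∈ Icc (X j) (X (j + 1)),
      v.vbV i j y = 0 ∧ v.vgV1 i j y = 0 ∧ v.vgV2 i j y = 0) := by
  have h0 := v0_eq_zero_of_tracesMatch hX (fun j hj => (hv.2.2 j hj).1) htr
    fun i hi j hj x hx y hy => eq_of_pd1_eq_zero ((hv.1.1 i hi j hj).differentiable_fst y)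
      (fun x hx => (hgrad i hi j hj x hx y hy).1) x hx
  have hmem : ∀ {a : ℕ}, a < N → ∀ l ∈ ({a, a + 1} : Set ℕ), X l ∈ Icc (X a) (X (a + 1)) := by
    rintro a ha l (rfl | rfl)
    exacts [⟨le_rfl, hX l ha⟩, ⟨hX a ha, le_rfl⟩]
  refine ⟨h0, fun i hi => forall_le_of_forall_mem_pair (by omega) fun j hj l hl x hx => ?_,
    fun i hi j hj => forall_le_of_forall_mem_pair (P := fun i => ∀ y ∈ Icc (X j) (X (j + 1)),
      v.vbV i j y = 0 ∧ v.vgV1 i j y = 0 ∧ v.vgV2 i j y = 0) (by omega)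
      (fun i hi l hl y hy => ?_) i hi⟩
  · obtain ⟨e₀, e₁, e₂⟩ := (htr i hi j hj).1 l hl x hx
    have hl' := hmem hj l hl
    exact ⟨e₀ ▸ h0 i hi j hj x hx _ hl', e₁ ▸ (hgrad i hi j hj x hx _ hl').1,
      e₂ ▸ (hgrad i hi j hj x hx _ hl').2⟩
  · obtain ⟨e₀, e₁, e₂⟩ := (htr i hi j hj).2 l hl y hy
    have hl' := hmem hi l hl
    exact ⟨e₀ ▸ h0 i hi j hj _ hl' y hy, e₁ ▸ (hgrad i hi j hj _ hl' y hy).1,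
      e₂ ▸ (hgrad i hi j hj _ hl' y hy).2⟩

end Propagation

theorem statement13_general (k : ℕ) (N : ℕ) (hN : 4 ≤ N) (hN4 : 4 ∣ N)
    (ε : ℝ) (hε0 : 0 < ε) (hlam : shLam k N ε ≤ 1 / 4)
    (v : WGFun) (hv : MemVN0 k N v)
    (D G1 G2 : ℕ → ℕ → ℝ → ℝ → ℝ)
    (hG : IsWeakGrad k N (shPt k N ε) v G1 G2)
    (hzero : aForm N (shPt k N ε) ε (shH k N ε) (shHc k N ε) v v D D G1 G2 G1 G2 = 0) :
    (∀ i < N, ∀ j < N, ∀ x ∈ Set.Icc (shPt k N ε i) (shPt k N ε (i+1)),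
      ∀ y ∈ Set.Icc (shPt k N ε j) (shPt k N ε (j+1)), v.v0 i j x y = 0) ∧
    (∀ i < N, ∀ j ≤ N, ∀ x ∈ Set.Icc (shPt k N ε i) (shPt k N ε (i+1)),
      v.vbH i j x = 0 ∧ v.vgH1 i j x = 0 ∧ v.vgH2 i j x = 0) ∧
    (∀ i ≤ N, ∀ j < N, ∀ y ∈ Set.Icc (shPt k N ε j) (shPt k N ε (j+1)),
      v.vbV i j y = 0 ∧ v.vgV1 i j y = 0 ∧ v.vgV2 i j y = 0) := by
  have hX : ∀ i < N, shPt k N ε i < shPt k N ε (i + 1) := fun i _ =>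
    shPt_strictMono hN hN4 hε0 hlam (Nat.lt_succ_self i)
  have hterms := terms_eq_zero_of_aForm_self_eq_zero (fun i hi => (hX i hi).le) hε0.ne'
    (shH_pos (by omega) hε0) (shHc_pos (by omega) (hlam.trans_lt (by norm_num))) hzero
  have htr : ∀ i < N, ∀ j < N, TracesMatch (shPt k N ε) v i j := fun i hi j hj =>
    tracesMatch_of_sPair_eq_zero hv.1 hi hj (hX i hi) (hX j hj) (hterms i hi j hj).2.2.2
      (hterms i hi j hj).2.2.1
  refine eq_zero_of_tracesMatch_of_gradient_eq_zero hv (fun i hi => (hX i hi).le) htr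
    fun i hi j hj => ?_
  exact gradient_eq_zero_of_weakGrad_eq_zero (hv.1.1 i hi j hj) hi hj (hX i hi) (hX j hj)
    (htr i hi j hj) hG (hterms i hi j hj).1 (hterms i hi j hj).2.1

/-- `|||·|||` is a norm on `V_N⁰`; in particular, if `v ∈ V_N⁰`
satisfies `|||v||| = 0` (equivalently `a(v,v) = 0`), then all three components
of `v` vanish identically (on the respective elements and edges). -/
theorem statement13 (k : ℕ) (hk : 3 ≤ k) (N : ℕ) (hN : 4 ≤ N) (hN4 : 4 ∣ N)
    (ε : ℝ) (hε0 : 0 < ε) (hε1 : ε < 1) (hlam : shLam k N ε ≤ 1 / 4)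
    (v : WGFun) (hv : MemVN0 k N v)
    (D G1 G2 : ℕ → ℕ → ℝ → ℝ → ℝ)
    (hD : IsWeakLap k N (shPt k N ε) v D)
    (hG : IsWeakGrad k N (shPt k N ε) v G1 G2)
    (hzero : aForm N (shPt k N ε) ε (shH k N ε) (shHc k N ε) v v D D G1 G2 G1 G2 = 0) :
    (∀ i < N, ∀ j < N, ∀ x ∈ Set.Icc (shPt k N ε i) (shPt k N ε (i+1)),
      ∀ y ∈ Set.Icc (shPt k N ε j) (shPt k N ε (j+1)), v.v0 i j x y = 0) ∧
    (∀ i < N, ∀ j ≤ N, ∀ x ∈ Set.Icc (shPt k N ε i) (shPt k N ε (i+1)),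
      v.vbH i j x = 0 ∧ v.vgH1 i j x = 0 ∧ v.vgH2 i j x = 0) ∧
    (∀ i ≤ N, ∀ j < N, ∀ y ∈ Set.Icc (shPt k N ε j) (shPt k N ε (j+1)),
      v.vbV i j y = 0 ∧ v.vgV1 i j y = 0 ∧ v.vgV2 i j y = 0) :=
  statement13_general k N hN hN4 ε hε0 hlam v hv D G1 G2 hG hzero
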